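/- arXiv:0901.0900 — 2 statements merged into one kernel-verified Lean document; each statement's English description precedes it below -/
import Mathlib

section
/- An element A ∈ M_n(E) with invariants (a,b) is strongly regular semisimple if and only if: (1) R_a(E) = E[t]/(P_a) is an étale E-algebra, i.e. P_a is separable; and (2) Δ_{a,b} ≠ 0, i.e. the R_a(E)-linear map γ′_{a,b} : R_a(E) → Hom_E(R_a(E), E), x ↦ (y ↦ b′(xy)), is an isomorphism. -/
/-!
Separability of `χ_A` occurs on both sides, so only the Krylov conditions matter.
By Cayley–Hamilton, `t ↦ A` defines an algebra map `E[t]/(χ_A) → Mₙ(E)`, and a linear functional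
on `E[t]/(χ_A)` is determined by its values on `1, t, …, tⁿ⁻¹`; hence `b'(tᵐ) = e₀^* Aᵐ e₀` for
every `m`. Therefore the Hankel matrix `(b'(t^{i+j}))` is the product of the matrix with rows
`e₀^* Aⁱ` and the matrix with columns `Aʲ e₀`, and `Δ ≠ 0` iff both families are bases.
Finally `Δ` is the Gram matrix of the bilinear form `(x, y) ↦ b'(xy)` in the basis `(tⁱ)`, and
this form is nondegenerate iff `x ↦ b'(x ·)` is an isomorphism onto the dual.
-/

open Matrix Polynomial

theorem AdjoinRoot.linearMap_ext_of_monic {R M : Type*} [CommRing R] [AddCommMonoid M]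
    [Module R M] {g : R[X]} (hg : g.Monic) {φ ψ : AdjoinRoot g →ₗ[R] M}
    (h : ∀ i < g.natDegree, φ (root g ^ i) = ψ (root g ^ i)) : φ = ψ :=
  (powerBasis' hg).basis.ext fun i => by
    simpa only [PowerBasis.coe_basis, powerBasis'_gen] using h i i.isLt

theorem LinearMap.BilinForm.bijective_iff_nondegenerate {K V : Type*} [Field K]
    [AddCommGroup V] [Module K V] [FiniteDimensional K V] {B : LinearMap.BilinForm K V} :
    Function.Bijective B ↔ B.Nondegenerate :=
  ⟨fun h => .ofSeparatingLeft (separatingLeft_iff_ker_eq_bot.mpr (ker_eq_bot.mpr h.injective)),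
    fun h => (B.toDual h).bijective⟩

theorem det_of_apply_mul_ne_zero_iff_bijective {K R ι : Type*} [Field K] [Ring R] [Algebra K R]
    [Fintype ι] [DecidableEq ι] (β : R →ₗ[K] K) (b : Module.Basis ι K R) :
    (of fun i j => β (b i * b j)).det ≠ 0 ↔
      Function.Bijective fun x : R => β ∘ₗ LinearMap.mul K R x := by
  have := b.finiteDimensional_of_finite
  let form : LinearMap.BilinForm K R := (LinearMap.mul K R).compr₂ β
  have hform : LinearMap.BilinForm.toMatrix b form = of fun i j => β (b i * b j) := by
    ext i j
    simp [form, LinearMap.BilinForm.toMatrix_apply]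
  rw [← hform, ← form.nondegenerate_iff_det_ne_zero b, ← form.bijective_iff_nondegenerate]
  rfl

theorem AdjoinRoot.det_of_apply_root_pow_add_ne_zero_iff_bijective {K : Type*} [Field K]
    {g : K[X]} (hg : g.Monic) {n : ℕ} (hn : g.natDegree = n) (β : AdjoinRoot g →ₗ[K] K) :
    (Matrix.of fun i j : Fin n => β (root g ^ ((i : ℕ) + (j : ℕ)))).det ≠ 0 ↔
      Function.Bijective fun x : AdjoinRoot g => β ∘ₗ LinearMap.mul K (AdjoinRoot g) x := by
  subst hn
  let b : Module.Basis (Fin g.natDegree) K (AdjoinRoot g) := (powerBasis' hg).basis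
  have hb : ∀ i, b i = root g ^ (i : ℕ) := fun i => (powerBasis' hg).basis_eq_pow i
  have hgram : (Matrix.of fun i j : Fin g.natDegree => β (root g ^ ((i : ℕ) + (j : ℕ)))) =
      Matrix.of fun i j => β (b i * b j) := by
    ext i j
    rw [of_apply, of_apply, hb, hb, pow_add]
  rw [hgram]
  exact det_of_apply_mul_ne_zero_iff_bijective β b

section

variable {K : Type*} [Field K] {n : ℕ}

namespace Matrix

def krylov (A : Matrix (Fin n) (Fin n) K) (v : Fin n → K) : Matrix (Fin n) (Fin n) K :=
  of fun i => A ^ (i : ℕ) *ᵥ v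

def dualKrylov (A : Matrix (Fin n) (Fin n) K) (w : Fin n → K) : Matrix (Fin n) (Fin n) K :=
  of fun i => w ᵥ* A ^ (i : ℕ)

theorem dualKrylov_mul_krylov_transpose (A : Matrix (Fin n) (Fin n) K) (v w : Fin n → K) :
    dualKrylov A w * (krylov A v)ᵀ =
      of fun i j : Fin n => w ⬝ᵥ (A ^ ((i : ℕ) + (j : ℕ)) *ᵥ v) := by
  ext i j
  change (w ᵥ* A ^ (i : ℕ)) ⬝ᵥ (A ^ (j : ℕ) *ᵥ v) = w ⬝ᵥ (A ^ ((i : ℕ) + j) *ᵥ v)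
  rw [pow_add, ← mulVec_mulVec, dotProduct_mulVec w]

theorem linearIndependent_and_span_eq_top_iff_det_ne_zero {ι : Type*} [Fintype ι]
    [DecidableEq ι] (v : ι → ι → K) :
    (LinearIndependent K v ∧ Submodule.span K (Set.range v) = ⊤) ↔ (of v).det ≠ 0 := by
  rw [← isUnit_iff_ne_zero, ← isUnit_iff_isUnit_det, ← linearIndependent_rows_iff_isUnit]
  exact ⟨And.left, fun hv => ⟨hv, hv.span_eq_top_of_card_eq_finrank' (by simp)⟩⟩

end Matrix

theorem AdjoinRoot.apply_root_pow_eq_dotProduct_pow_mulVec (A : Matrix (Fin n) (Fin n) K)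
    (v w : Fin n → K) (β : AdjoinRoot A.charpoly →ₗ[K] K)
    (hβ : ∀ i : Fin n, β (root A.charpoly ^ (i : ℕ)) = w ⬝ᵥ (A ^ (i : ℕ) *ᵥ v)) (m : ℕ) :
    β (root A.charpoly ^ m) = w ⬝ᵥ (A ^ m *ᵥ v) := by
  have hA : ∀ p ∈ Ideal.span {A.charpoly}, aeval A p = 0 := fun p hp => by
    obtain ⟨q, rfl⟩ := Ideal.mem_span_singleton'.mp hp
    simp [aeval_self_charpoly]
  -- `AdjoinRoot.liftAlgHom` needs a commutative target, so lift through the quotient instead.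
  let evalAt : AdjoinRoot A.charpoly →ₐ[K] Matrix (Fin n) (Fin n) K :=
    Ideal.Quotient.liftₐ _ (aeval A) hA
  have hroot : evalAt (root A.charpoly) = A := aeval_X A
  let pairing : Matrix (Fin n) (Fin n) K →ₗ[K] K :=
    { toFun := fun M => w ⬝ᵥ (M *ᵥ v)
      map_add' := by simp [add_mulVec, dotProduct_add]
      map_smul' := by simp [smul_mulVec, dotProduct_smul] }
  have hβ_eq : β = pairing ∘ₗ evalAt.toLinearMap := by
    refine linearMap_ext_of_monic A.charpoly_monic fun i hi => ?_
    rw [charpoly_natDegree_eq_dim, Fintype.card_fin] at hi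
    simpa [pairing, hroot] using hβ ⟨i, hi⟩
  simp [hβ_eq, pairing, hroot]

end

theorem strongly_regular_semisimple_iff_separable_and_delta_ne_zero_general
    (E : Type*) [Field E] (n : ℕ)
    (i0 : Fin n)
    (e0 : Fin n → E) (he0 : e0 = Pi.single i0 1)
    (A : Matrix (Fin n) (Fin n) E)
    (b' : AdjoinRoot A.charpoly →ₗ[E] E)
    (hb' : ∀ i : Fin n,
      b' (AdjoinRoot.root A.charpoly ^ (i : ℕ)) = ((A ^ (i : ℕ)) *ᵥ e0) i0) :
    ((A.charpoly.Separable ∧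
        (LinearIndependent E (fun i : Fin n => (A ^ (i : ℕ)) *ᵥ e0) ∧
          Submodule.span E (Set.range fun i : Fin n => (A ^ (i : ℕ)) *ᵥ e0) = ⊤) ∧
        (LinearIndependent E (fun i : Fin n => Matrix.vecMul e0 (A ^ (i : ℕ))) ∧
          Submodule.span E (Set.range fun i : Fin n => Matrix.vecMul e0 (A ^ (i : ℕ))) = ⊤)) ↔
      (A.charpoly.Separable ∧
        (Matrix.of fun i j : Fin n =>
          b' (AdjoinRoot.root A.charpoly ^ ((i : ℕ) + (j : ℕ)))).det ≠ 0)) ∧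
    ((Matrix.of fun i j : Fin n =>
        b' (AdjoinRoot.root A.charpoly ^ ((i : ℕ) + (j : ℕ)))).det ≠ 0 ↔
      Function.Bijective fun x : AdjoinRoot A.charpoly =>
        b' ∘ₗ LinearMap.mul E (AdjoinRoot A.charpoly) x) := by
  have hb : ∀ m : ℕ, b' (AdjoinRoot.root A.charpoly ^ m) = e0 ⬝ᵥ (A ^ m *ᵥ e0) :=
    AdjoinRoot.apply_root_pow_eq_dotProduct_pow_mulVec A e0 e0 b' fun i => by
      rw [hb', he0, single_dotProduct, one_mul]
  have hΔ : (of fun i j : Fin n => b' (AdjoinRoot.root A.charpoly ^ ((i : ℕ) + (j : ℕ)))) =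
      dualKrylov A e0 * (krylov A e0)ᵀ := by
    simp only [dualKrylov_mul_krylov_transpose, hb]
  refine ⟨?_, AdjoinRoot.det_of_apply_root_pow_add_ne_zero_iff_bijective A.charpoly_monic
    (by rw [charpoly_natDegree_eq_dim, Fintype.card_fin]) b'⟩
  rw [hΔ, det_mul, det_transpose, mul_ne_zero_iff,
    linearIndependent_and_span_eq_top_iff_det_ne_zero,
    linearIndependent_and_span_eq_top_iff_det_ne_zero]
  exact and_congr_right' and_comm

theorem strongly_regular_semisimple_iff_separable_and_delta_ne_zero
    (E : Type*) [Field E] (n : ℕ) (hn : 1 ≤ n)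
    (i0 : Fin n) (hi0 : (i0 : ℕ) = n - 1)
    (e0 : Fin n → E) (he0 : e0 = Pi.single i0 1)
    (A : Matrix (Fin n) (Fin n) E)
    (b' : AdjoinRoot A.charpoly →ₗ[E] E)
    (hb' : ∀ i : Fin n,
      b' (AdjoinRoot.root A.charpoly ^ (i : ℕ)) = ((A ^ (i : ℕ)) *ᵥ e0) i0) :
    ((A.charpoly.Separable ∧
        (LinearIndependent E (fun i : Fin n => (A ^ (i : ℕ)) *ᵥ e0) ∧
          Submodule.span E (Set.range fun i : Fin n => (A ^ (i : ℕ)) *ᵥ e0) = ⊤) ∧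
        (LinearIndependent E (fun i : Fin n => Matrix.vecMul e0 (A ^ (i : ℕ))) ∧
          Submodule.span E (Set.range fun i : Fin n => Matrix.vecMul e0 (A ^ (i : ℕ))) = ⊤)) ↔
      (A.charpoly.Separable ∧
        (Matrix.of fun i j : Fin n =>
          b' (AdjoinRoot.root A.charpoly ^ ((i : ℕ) + (j : ℕ)))).det ≠ 0)) ∧
    ((Matrix.of fun i j : Fin n =>
        b' (AdjoinRoot.root A.charpoly ^ ((i : ℕ) + (j : ℕ)))).det ≠ 0 ↔
      Function.Bijective fun x : AdjoinRoot A.charpoly =>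
        b' ∘ₗ LinearMap.mul E (AdjoinRoot A.charpoly) x) :=
  strongly_regular_semisimple_iff_separable_and_delta_ne_zero_general E n i0 e0 he0 A b' hb'
end

section
/- Let R be a commutative O-algebra which is finite free of rank n as an O-module, and suppose that the κ-algebra R ⊗_O κ is generated by a single element as a κ-algebra. Then R is generated by a single element as an O-algebra, and there exist a monic polynomial P ∈ O[t] of degree n and an O-algebra isomorphism O[t]/(P) ≅ R. Equivalently: if φ : O[t] → R is a surjective O-algebra homomorphism onto an O-algebra R that is finite free of rank n as an O-module, then ker(φ) is generated by a monic polynomial of degree n. -/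
/-!
Lift a generator of `R ⊗_O κ` to `r ∈ R`. As `O → κ` is surjective, the `O`-subalgebra `O[r]`
maps onto `R ⊗_O κ = R / 𝔪R`, so `O[r] = R` by Nakayama. For a finite free algebra generated by
`r`, the surjection `O[X]/(minpoly r) → R` is an isomorphism: by Cayley–Hamilton the degree of the
minimal polynomial is at most the rank of `R`, and over a commutative ring a surjection from a
finite free module onto one of at least the same rank is bijective. So `minpoly r` is monic of
degree `n`, and it generates `ker φ` for any surjection `φ : O[X] → R`, taking `r = φ X`.
-/

open Polynomial

theorem Subalgebra.restrictScalars_adjoin_of_algebraMap_surjective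
    {R S A : Type*} [CommSemiring R] [CommSemiring S] [Semiring A] [Algebra R S] [Algebra S A]
    [Algebra R A] [IsScalarTower R S A] (hRS : Function.Surjective (algebraMap R S)) (s : Set A) :
    (Algebra.adjoin S s).restrictScalars R = Algebra.adjoin R s := by
  rw [Algebra.Subalgebra.restrictScalars_adjoin, sup_eq_right]
  rintro _ ⟨c, rfl⟩
  obtain ⟨a, rfl⟩ := hRS c
  exact IsScalarTower.algebraMap_apply R S A a ▸ Subalgebra.algebraMap_mem _ a

theorem IsLocalRing.adjoin_eq_top_of_adjoin_includeRight_eq_top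
    {O R : Type*} [CommRing O] [IsLocalRing O] [CommRing R] [Algebra O R] [Module.Finite O R]
    {s : Set R} (hs : Algebra.adjoin (ResidueField O) ((Algebra.TensorProduct.includeRight :
      R →ₐ[O] TensorProduct O (ResidueField O) R) '' s) = ⊤) :
    Algebra.adjoin O s = ⊤ := by
  rw [← Algebra.toSubmodule_eq_top, ← IsLocalRing.map_tensorProduct_mk_eq_top]
  let ι : R →ₐ[O] TensorProduct O (ResidueField O) R := Algebra.TensorProduct.includeRight
  have hmap : (Algebra.adjoin O s).map ι =
      (Algebra.adjoin (ResidueField O) (ι '' s)).restrictScalars O := by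
    rw [AlgHom.map_adjoin, Subalgebra.restrictScalars_adjoin_of_algebraMap_surjective
      IsLocalRing.residue_surjective]
  rw [hs, Subalgebra.restrictScalars_top] at hmap
  exact Subalgebra.map_toSubmodule.symm.trans (congrArg Subalgebra.toSubmodule hmap)

theorem Polynomial.adjoin_algHom_X_eq_top {O R : Type*} [CommSemiring O] [CommSemiring R]
    [Algebra O R] (φ : O[X] →ₐ[O] R) (hφ : Function.Surjective φ) : Algebra.adjoin O {φ X} = ⊤ := by
  rwa [Algebra.adjoin_singleton_eq_range_aeval, aeval_algHom, aeval_X_left, AlgHom.comp_id,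
    AlgHom.range_eq_top]

theorem Polynomial.ker_algHom_eq_span_minpoly {O R : Type*} [CommRing O] [CommRing R] [Algebra O R]
    [Module.Finite O R] [Module.Free O R] (φ : O[X] →ₐ[O] R) (hφ : Function.Surjective φ) :
    RingHom.ker φ = Ideal.span {minpoly O (φ X)} := by
  have h := (IsAdjoinRootMonic.mkOfAdjoinEqTop' (adjoin_algHom_X_eq_top φ hφ)).ker_map
  rwa [IsAdjoinRootMonic.mkOfAdjoinEqTop'_map, aeval_algHom, aeval_X_left, AlgHom.comp_id] at h

theorem monogenic_finite_free_algebra_over_dvr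
    (O : Type) [CommRing O] [IsDomain O] [IsDiscreteValuationRing O]
    (n : ℕ) (hn : 1 ≤ n)
    (R : Type) [CommRing R] [Algebra O R] [Module.Free O R]
    (hrank : Module.finrank O R = n)
    (hgen : ∃ x : TensorProduct O (IsLocalRing.ResidueField O) R,
      Algebra.adjoin (IsLocalRing.ResidueField O) {x} = ⊤) :
    ((∃ x : R, Algebra.adjoin O {x} = ⊤) ∧
      ∃ P : O[X], P.Monic ∧ P.natDegree = n ∧ Nonempty (AdjoinRoot P ≃ₐ[O] R)) ∧
    (∀ (R' : Type) [CommRing R'] [Algebra O R'] [Module.Free O R'],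
      Module.finrank O R' = n →
      ∀ φ : O[X] →ₐ[O] R', Function.Surjective φ →
        ∃ P : O[X], P.Monic ∧ P.natDegree = n ∧
          RingHom.ker φ.toRingHom = Ideal.span {P}) := by
  have : Module.Finite O R := Module.finite_of_finrank_pos (by omega)
  obtain ⟨x, hx⟩ := hgen
  obtain ⟨r, rfl⟩ := Algebra.TensorProduct.includeRight_surjective R
    IsLocalRing.residue_surjective x
  rw [← Set.image_singleton] at hx
  have hr := IsLocalRing.adjoin_eq_top_of_adjoin_includeRight_eq_top hx
  have h := IsAdjoinRootMonic.mkOfAdjoinEqTop' hr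
  refine ⟨⟨⟨r, hr⟩, _, h.monic, h.finrank.symm.trans hrank, ⟨h.adjoinRootAlgEquiv⟩⟩, ?_⟩
  intro R' _ _ _ hrank' φ hφ
  have : Module.Finite O R' := Module.finite_of_finrank_pos (by omega)
  have h' := IsAdjoinRootMonic.mkOfAdjoinEqTop' (adjoin_algHom_X_eq_top φ hφ)
  exact ⟨_, h'.monic, h'.finrank.symm.trans hrank', ker_algHom_eq_span_minpoly φ hφ⟩
end
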